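/- Suppose there exists λ* ∈ ℂ with Re λ* > 0 and h(λ*) = 0. Then ∫₀ᵗ X(s)² ds → +∞ as t → +∞; in particular, for every σ₀ ≠ 0 the function M(t) = σ₀² ∫₀ᵗ X(s)² ds is unbounded on [0,∞). -/

import Mathlib

/-!
If `∫₀^∞ X² < ∞`, then `t ↦ e^{-zt} X(t)` is integrable for every `Re z > 0`, because
`e^{-ct} |X| ≤ (e^{-2ct} + X²) / 2`; so the Laplace transform `ℒX(z)` converges. The delay
equation says `X = H + H ⋆ (a X + b (K ⋆ X))` with `H` the Heaviside function, and the Laplace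
transform turns convolutions into products, with `ℒH(z) = 1/z`. Hence `h(z) ℒX(z) = 1`, which is
impossible at a zero `z` of `h`. So `∫₀ᵗ X²`, which is nondecreasing in `t`, tends to `+∞`.
-/

open MeasureTheory Real Set

/-- `X` is the fundamental solution of the delay equation. -/
def IsFundamental (a b : ℝ) (K : ℝ → ℝ) (X : ℝ → ℝ) : Prop :=
  (∀ t < (0 : ℝ), X t = 0) ∧ X 0 = 1 ∧ ContinuousOn X (Set.Ici 0) ∧
  ∀ t ≥ (0 : ℝ), X t = 1 + ∫ u in (0 : ℝ)..t,
    (a * X u + b * ∫ s in Set.Ioi (0 : ℝ), K s * X (u - s))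

/-- The characteristic function `h(λ) = λ - a - b ∫₀^∞ e^{-λ s} K(s) ds`. -/
noncomputable def charFn (a b : ℝ) (K : ℝ → ℝ) (z : ℂ) : ℂ :=
  z - (a : ℂ) - (b : ℂ) * ∫ s in Set.Ioi (0 : ℝ), Complex.exp (-z * s) * (K s : ℂ)

open Filter

local notation:67 f " ⋆ " g:66 => convolution f g (ContinuousLinearMap.mul ℂ ℂ) volume

def LaplaceIntegrable (f : ℝ → ℂ) (z : ℂ) : Prop :=
  Integrable fun t : ℝ => Complex.exp (-z * t) * f t

/-- The two-sided Laplace transform; it is `0` where `LaplaceIntegrable f z` fails. -/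
noncomputable def laplace (f : ℝ → ℂ) (z : ℂ) : ℂ :=
  ∫ t : ℝ, Complex.exp (-z * t) * f t

theorem exp_mul_indicator (s : Set ℝ) (f : ℝ → ℂ) (z : ℂ) :
    (fun t : ℝ => Complex.exp (-z * t) * s.indicator f t) =
      s.indicator fun t => Complex.exp (-z * t) * f t :=
  funext fun _ => (indicator_mul_right s (fun t : ℝ => Complex.exp (-z * t)) f).symm

theorem exp_mul_convolution (f g : ℝ → ℂ) (z : ℂ) :
    (fun x : ℝ => Complex.exp (-z * x) * (f ⋆ g) x) =
      (fun t : ℝ => Complex.exp (-z * t) * f t) ⋆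
        fun t : ℝ => Complex.exp (-z * t) * g t := by
  ext x
  simp only [convolution_def, ContinuousLinearMap.mul_apply', ← integral_const_mul]
  congr 1 with t
  have hsplit : Complex.exp (-z * x) = Complex.exp (-z * t) * Complex.exp (-z * ↑(x - t)) := by
    rw [← Complex.exp_add]
    push_cast
    ring_nf
  rw [hsplit]
  ring

namespace LaplaceIntegrable

variable {f g : ℝ → ℂ} {z : ℂ}

theorem add (hf : LaplaceIntegrable f z) (hg : LaplaceIntegrable g z) :
    LaplaceIntegrable (fun t => f t + g t) z := by
  refine (Integrable.add hf hg).congr (Eventually.of_forall fun t => ?_)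
  simp only [Pi.add_apply, mul_add]

theorem const_mul (hf : LaplaceIntegrable f z) (c : ℂ) :
    LaplaceIntegrable (fun t => c * f t) z := by
  simpa only [LaplaceIntegrable, mul_left_comm] using Integrable.const_mul hf c

theorem convolution (hf : LaplaceIntegrable f z) (hg : LaplaceIntegrable g z) :
    LaplaceIntegrable (f ⋆ g) z := by
  rw [LaplaceIntegrable, exp_mul_convolution]
  exact Integrable.integrable_convolution _ hf hg

end LaplaceIntegrable

section Laplace

variable {f g : ℝ → ℂ} {z : ℂ}

theorem laplace_add (hf : LaplaceIntegrable f z) (hg : LaplaceIntegrable g z) :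
    laplace (fun t => f t + g t) z = laplace f z + laplace g z := by
  simp only [laplace, mul_add]
  exact integral_add hf hg

theorem laplace_const_mul (c : ℂ) :
    laplace (fun t => c * f t) z = c * laplace f z := by
  simp only [laplace, mul_left_comm _ c, integral_const_mul]

theorem laplace_convolution (hf : LaplaceIntegrable f z) (hg : LaplaceIntegrable g z) :
    laplace (f ⋆ g) z = laplace f z * laplace g z := by
  rw [laplace, exp_mul_convolution, integral_convolution _ hf hg]
  rfl

theorem laplaceIntegrable_indicator_Ioi {κ : ℝ → ℂ} (hκ : IntegrableOn κ (Ioi 0))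
    (hz : 0 ≤ z.re) : LaplaceIntegrable ((Ioi 0).indicator κ) z := by
  rw [LaplaceIntegrable, exp_mul_indicator, integrable_indicator_iff measurableSet_Ioi]
  refine Integrable.mono' hκ.norm
    ((by fun_prop : Continuous fun t : ℝ => Complex.exp (-z * t)).aestronglyMeasurable.mul hκ.1)
    ((ae_restrict_iff' measurableSet_Ioi).2 (Eventually.of_forall fun t (ht : 0 < t) => ?_))
  rw [norm_mul, Complex.norm_exp]
  refine mul_le_of_le_one_left (norm_nonneg _) (Real.exp_le_one_iff.2 ?_)
  simp only [Complex.mul_re, Complex.neg_re, Complex.ofReal_re, Complex.neg_im,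
    Complex.ofReal_im, mul_zero, sub_zero]
  nlinarith

theorem laplace_indicator_Ioi (κ : ℝ → ℂ) :
    laplace ((Ioi 0).indicator κ) z = ∫ s : ℝ in Ioi 0, Complex.exp (-z * s) * κ s := by
  rw [laplace, exp_mul_indicator, integral_indicator measurableSet_Ioi]

theorem laplaceIntegrable_heaviside (hz : 0 < z.re) :
    LaplaceIntegrable ((Ici 0).indicator 1) z := by
  rw [LaplaceIntegrable, exp_mul_indicator, integrable_indicator_iff measurableSet_Ici,
    integrableOn_Ici_iff_integrableOn_Ioi]
  simpa using integrableOn_exp_mul_complex_Ioi (a := -z) (by simpa using hz) 0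

theorem mul_laplace_heaviside (hz : 0 < z.re) : z * laplace ((Ici 0).indicator 1) z = 1 := by
  have hz0 : z ≠ 0 := by
    rintro rfl
    simp at hz
  rw [laplace, exp_mul_indicator, integral_indicator measurableSet_Ici,
    integral_Ici_eq_integral_Ioi]
  simp only [Pi.one_apply, mul_one]
  rw [integral_exp_mul_complex_Ioi (by simpa using hz) 0]
  field_simp
  simp

theorem laplaceIntegrable_ofReal_of_integrableOn_sq {X : ℝ → ℝ} (hX0 : ∀ t < 0, X t = 0)
    (hXm : AEStronglyMeasurable X (volume.restrict (Ioi 0)))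
    (hX2 : IntegrableOn (fun t => X t ^ 2) (Ioi 0)) (hz : 0 < z.re) :
    LaplaceIntegrable (fun t => (X t : ℂ)) z := by
  have hsupp : (fun t : ℝ => Complex.exp (-z * t) * X t) =
      (Ici 0).indicator fun t : ℝ => Complex.exp (-z * t) * X t := by
    ext t
    by_cases ht : 0 ≤ t
    · simp [ht]
    · simp [ht, hX0 t (not_le.1 ht)]
  rw [LaplaceIntegrable, hsupp, integrable_indicator_iff measurableSet_Ici,
    integrableOn_Ici_iff_integrableOn_Ioi]
  refine Integrable.mono' (g := fun t => (Real.exp (-(2 * z.re) * t) + X t ^ 2) / 2)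
    (((exp_neg_integrableOn_Ioi 0 (by positivity)).add hX2).div_const 2)
    ((by fun_prop : Continuous fun t : ℝ => Complex.exp (-z * t)).aestronglyMeasurable.mul
      (Complex.continuous_ofReal.comp_aestronglyMeasurable hXm)) (Eventually.of_forall fun t => ?_)
  have hsq : Real.exp (-(2 * z.re) * t) = Real.exp (-z.re * t) ^ 2 := by
    rw [← Real.exp_nat_mul]
    ring_nf
  rw [norm_mul, Complex.norm_exp, Complex.norm_real, Real.norm_eq_abs, hsq]
  simp only [neg_mul, Complex.mul_re, Complex.neg_re, Complex.ofReal_re,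
    Complex.ofReal_im, mul_zero, sub_zero]
  nlinarith [sq_nonneg (Real.exp (-(z.re * t)) - |X t|), sq_abs (X t)]

end Laplace

theorem indicator_Ioi_convolution_apply (κ g : ℝ → ℂ) (u : ℝ) :
    ((Ioi 0).indicator κ ⋆ g) u = ∫ s in Ioi 0, κ s * g (u - s) := by
  simp only [convolution_def, ContinuousLinearMap.mul_apply']
  rw [funext fun s => (indicator_mul_left _ κ fun s => g (u - s)).symm,
    integral_indicator measurableSet_Ioi]

theorem indicator_Ioi_convolution_eq_zero {κ g : ℝ → ℂ} (hg : ∀ t < 0, g t = 0) {u : ℝ}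
    (hu : u < 0) : ((Ioi 0).indicator κ ⋆ g) u = 0 := by
  rw [indicator_Ioi_convolution_apply]
  refine setIntegral_eq_zero_of_forall_eq_zero fun s (hs : 0 < s) => ?_
  rw [hg _ (by linarith), mul_zero]

theorem heaviside_convolution_apply {G : ℝ → ℂ} (hG : ∀ u < 0, G u = 0) (t : ℝ) :
    ((Ici 0).indicator 1 ⋆ G) t = ∫ u in Icc 0 t, G u := by
  rw [convolution_def, ← integral_indicator measurableSet_Icc,
    ← integral_sub_left_eq_self _ volume t]
  congr 1 with u
  by_cases hu : 0 ≤ u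
  · by_cases hut : u ≤ t <;> simp [hu, hut]
  · simp [hu, hG u (not_le.1 hu)]

theorem IsFundamental.eq_heaviside_add_convolution {a b : ℝ} {K X : ℝ → ℝ}
    (hX : IsFundamental a b K X) :
    (fun t => (X t : ℂ)) = fun t => (Ici 0).indicator 1 t + ((Ici 0).indicator 1 ⋆
      fun u => (a : ℂ) * X u + b * ((Ioi 0).indicator (fun s => (K s : ℂ)) ⋆
        fun t => (X t : ℂ)) u) t := by
  obtain ⟨hX0, -, -, hXeq⟩ := hX
  set G : ℝ → ℂ := fun u =>
    (a : ℂ) * X u + b * ((Ioi 0).indicator (fun s => (K s : ℂ)) ⋆ fun t => (X t : ℂ)) u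
  have hG0 : ∀ u < 0, G u = 0 := fun u hu => by
    simp [G, hX0 u hu, indicator_Ioi_convolution_eq_zero (g := fun t => (X t : ℂ))
      (fun t ht => by simp [hX0 t ht]) hu]
  ext t
  rw [heaviside_convolution_apply hG0]
  rcases lt_or_ge t 0 with ht | ht
  · simp [hX0 t ht, ht]
  · rw [hXeq t ht, integral_Icc_eq_integral_Ioc, ← intervalIntegral.integral_of_le ht]
    push_cast
    rw [← intervalIntegral.integral_ofReal]
    simp [ht, G, indicator_Ioi_convolution_apply, ← integral_complex_ofReal]

theorem not_integrableOn_sq_of_charFn_eq_zero {a b : ℝ} {K X : ℝ → ℝ}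
    (hKint : IntegrableOn K (Ioi 0)) (hX : IsFundamental a b K X) {z : ℂ} (hz : 0 < z.re)
    (hchar : charFn a b K z = 0) : ¬IntegrableOn (fun t => X t ^ 2) (Ioi 0) := by
  intro hX2
  set x : ℝ → ℂ := fun t => X t
  set k : ℝ → ℂ := (Ioi 0).indicator fun s => (K s : ℂ)
  set H : ℝ → ℂ := (Ici 0).indicator 1
  set G : ℝ → ℂ := fun u => (a : ℂ) * x u + b * (k ⋆ x) u
  have hx : LaplaceIntegrable x z :=
    laplaceIntegrable_ofReal_of_integrableOn_sq hX.1
      ((hX.2.2.1.mono Ioi_subset_Ici_self).aestronglyMeasurable measurableSet_Ioi) hX2 hz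
  have hk : LaplaceIntegrable k z := laplaceIntegrable_indicator_Ioi hKint.ofReal hz.le
  have hH : LaplaceIntegrable H z := laplaceIntegrable_heaviside hz
  have hG : LaplaceIntegrable G z := (hx.const_mul a).add ((hk.convolution hx).const_mul b)
  have hLx : laplace x z = laplace H z + laplace H z * laplace G z := by
    have hxeq : x = fun t => H t + (H ⋆ G) t := hX.eq_heaviside_add_convolution
    conv_lhs => rw [hxeq]
    rw [laplace_add hH (hH.convolution hG), laplace_convolution hH hG]
  have hLG : laplace G z = a * laplace x z + b * (laplace k z * laplace x z) := by
    rw [laplace_add (hx.const_mul a) ((hk.convolution hx).const_mul b), laplace_const_mul,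
      laplace_const_mul, laplace_convolution hk hx]
  have hLk : laplace k z = ∫ s : ℝ in Ioi 0, Complex.exp (-z * s) * (K s : ℂ) :=
    laplace_indicator_Ioi _
  have hcharL : charFn a b K z * laplace x z = 1 := by
    rw [charFn, ← hLk]
    linear_combination z * hLx + (1 + laplace G z) * mul_laplace_heaviside hz + hLG
  simp [hchar] at hcharL

theorem tendsto_intervalIntegral_atTop_of_not_integrableOn {f : ℝ → ℝ}
    (hf0 : ∀ x, 0 ≤ f x) (hfi : ∀ t ≥ 0, IntervalIntegrable f volume 0 t)
    (hf : ¬IntegrableOn f (Ioi 0)) :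
    Tendsto (fun t => ∫ x in 0..t, f x) atTop atTop := by
  refine tendsto_atTop_atTop.2 fun R => ?_
  by_contra! h
  refine hf (integrableOn_Ioi_of_intervalIntegral_norm_bounded R 0 (fun i => ?_) tendsto_id ?_)
  · rcases le_total 0 i with hi | hi
    · exact (hfi i hi).1
    · simp [Ioc_eq_empty (not_lt.2 hi)]
  · filter_upwards [eventually_ge_atTop 0] with i hi
    obtain ⟨t, hit, ht⟩ := h i
    simp_rw [id, Real.norm_of_nonneg (hf0 _)]
    exact (intervalIntegral.integral_mono_interval le_rfl hi hit
      (Eventually.of_forall hf0) (hfi t (hi.trans hit))).trans ht.le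

theorem stmt15_general (a b : ℝ) (K : ℝ → ℝ)
    (hKint : IntegrableOn K (Set.Ioi 0))
    (X : ℝ → ℝ) (hX : IsFundamental a b K X)
    (hzero : ∃ zstar : ℂ, 0 < zstar.re ∧ charFn a b K zstar = 0) :
    Filter.Tendsto (fun t : ℝ => ∫ s in (0 : ℝ)..t, X s ^ 2)
      Filter.atTop Filter.atTop ∧
    ∀ σ₀ : ℝ, σ₀ ≠ 0 →
      ¬∃ R : ℝ, ∀ t ≥ (0 : ℝ), σ₀ ^ 2 * (∫ s in (0 : ℝ)..t, X s ^ 2) ≤ R := by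
  obtain ⟨z, hz, hchar⟩ := hzero
  have hXc : ContinuousOn X (Ici 0) := hX.2.2.1
  have hloc (t : ℝ) (ht : 0 ≤ t) : IntervalIntegrable (fun s => X s ^ 2) volume 0 t :=
    ((hXc.mono (by simp [uIcc_of_le ht, Icc_subset_Ici_self])).pow 2).intervalIntegrable
  have htendsto := tendsto_intervalIntegral_atTop_of_not_integrableOn (fun s => sq_nonneg (X s))
    hloc (not_integrableOn_sq_of_charFn_eq_zero hKint hX hz hchar)
  refine ⟨htendsto, fun σ₀ hσ₀ ⟨R, hR⟩ => ?_⟩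
  have hM : Tendsto (fun t => σ₀ ^ 2 * ∫ s in (0 : ℝ)..t, X s ^ 2) atTop atTop :=
    htendsto.const_mul_atTop (by positivity)
  obtain ⟨t, ht, htR⟩ := ((eventually_ge_atTop 0).and (hM.eventually_gt_atTop R)).exists
  linarith [hR t ht]

theorem stmt15 (a b μ : ℝ) (K : ℝ → ℝ)
    (hKmeas : Measurable K) (hKpos : ∀ s ≥ (0 : ℝ), 0 ≤ K s)
    (hKint : IntegrableOn K (Set.Ioi 0))
    (hKone : (∫ s in Set.Ioi (0 : ℝ), K s) = 1)
    (hμ : 0 < μ)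
    (hρint : IntegrableOn (fun s => Real.exp (μ * s) * K s) (Set.Ioi 0))
    (X : ℝ → ℝ) (hX : IsFundamental a b K X)
    (hzero : ∃ zstar : ℂ, 0 < zstar.re ∧ charFn a b K zstar = 0) :
    Filter.Tendsto (fun t : ℝ => ∫ s in (0 : ℝ)..t, X s ^ 2)
      Filter.atTop Filter.atTop ∧
    ∀ σ₀ : ℝ, σ₀ ≠ 0 →
      ¬∃ R : ℝ, ∀ t ≥ (0 : ℝ), σ₀ ^ 2 * (∫ s in (0 : ℝ)..t, X s ^ 2) ≤ R :=
  stmt15_general a b K hKint X hX hzero
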